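/- arXiv:1411.6233 — 3 statements merged into one kernel-verified Lean document; each statement's English description precedes it below -/
import Mathlib

section
/- Let X ∈ ℝ^{d×n} and A ∈ ℝ^{d×k} with AᵀA = I_k. The function B ↦ ‖A Bᵀ X − X‖_F² over B ∈ ℝ^{d×k} is minimized at any B satisfying X Xᵀ B = X Xᵀ A; in particular B = A is a minimizer. -/
open Matrix

/-- squared Frobenius norm -/
noncomputable def frobSq {d n : ℕ} (M : Matrix (Fin d) (Fin n) ℝ) : ℝ :=
  ∑ i, ∑ j, (M i j) ^ 2

lemma frobSq_eq_trace {d n : ℕ} (M : Matrix (Fin d) (Fin n) ℝ) :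
    frobSq M = (Mᵀ * M).trace := by
  simp only [frobSq, Matrix.trace, Matrix.diag, Matrix.mul_apply, Matrix.transpose_apply, sq]
  exact Finset.sum_comm

lemma frobSq_nonneg {d n : ℕ} (M : Matrix (Fin d) (Fin n) ℝ) : 0 ≤ frobSq M := by
  apply Finset.sum_nonneg; intro i _
  apply Finset.sum_nonneg; intro j _
  positivity

lemma expand_lemma (d n k : ℕ) (X : Matrix (Fin d) (Fin n) ℝ)
    (A B : Matrix (Fin d) (Fin k) ℝ) (hA : Aᵀ * A = 1) :
    frobSq (A * Bᵀ * X - X) =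
      (Bᵀ * (X * Xᵀ) * B).trace - 2 * (Bᵀ * (X * Xᵀ) * A).trace + (Xᵀ * X).trace := by
  rw [frobSq_eq_trace]
  have h1 : (A * Bᵀ * X - X)ᵀ * (A * Bᵀ * X - X)
      = Xᵀ * B * Aᵀ * (A * Bᵀ * X) - Xᵀ * B * Aᵀ * X - Xᵀ * (A * Bᵀ * X) + Xᵀ * X := by
    simp only [Matrix.transpose_sub, Matrix.transpose_mul, Matrix.transpose_transpose,
      Matrix.sub_mul, Matrix.mul_sub]
    noncomm_ring
    simp only [Matrix.mul_assoc]
    abel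
  rw [h1]
  have hAA : Xᵀ * B * Aᵀ * (A * Bᵀ * X) = Xᵀ * B * Bᵀ * X := by
    calc Xᵀ * B * Aᵀ * (A * Bᵀ * X) = Xᵀ * B * (Aᵀ * A) * (Bᵀ * X) := by
          simp only [Matrix.mul_assoc]
      _ = Xᵀ * B * Bᵀ * X := by rw [hA]; simp only [Matrix.mul_one, Matrix.mul_assoc]
  rw [hAA]
  have t1 : (Xᵀ * B * Bᵀ * X).trace = (Bᵀ * (X * Xᵀ) * B).trace := by
    rw [show Xᵀ * B * Bᵀ * X = (Xᵀ * B) * (Bᵀ * X) by simp only [Matrix.mul_assoc],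
      Matrix.trace_mul_comm]
    simp only [Matrix.mul_assoc]
  have t2 : (Xᵀ * B * Aᵀ * X).trace = (Bᵀ * (X * Xᵀ) * A).trace := by
    have := Matrix.trace_transpose (Xᵀ * B * Aᵀ * X)
    rw [← this]
    simp only [Matrix.transpose_mul, Matrix.transpose_transpose]
    rw [show Xᵀ * (A * (Bᵀ * X)) = (Xᵀ * A) * (Bᵀ * X) by simp only [Matrix.mul_assoc],
      Matrix.trace_mul_comm]
    simp only [Matrix.mul_assoc]
  have t3 : (Xᵀ * (A * Bᵀ * X)).trace = (Bᵀ * (X * Xᵀ) * A).trace := by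
    rw [Matrix.trace_mul_comm]
    rw [show A * Bᵀ * X * Xᵀ = A * (Bᵀ * (X * Xᵀ)) by simp only [Matrix.mul_assoc],
      Matrix.trace_mul_comm]
    try simp only [Matrix.mul_assoc]
  rw [Matrix.trace_add, Matrix.trace_sub, Matrix.trace_sub, t1, t2, t3]
  ring

/-- For `X ∈ ℝ^{d×n}` and `A ∈ ℝ^{d×k}` with `AᵀA = I_k`, the function
`B ↦ ‖A Bᵀ X − X‖_F²` is minimized at any `B` satisfying `X Xᵀ B = X Xᵀ A`;
in particular `B = A` is a minimizer. -/
theorem stmt_5 (d n k : ℕ) (X : Matrix (Fin d) (Fin n) ℝ)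
    (A : Matrix (Fin d) (Fin k) ℝ) (hA : Aᵀ * A = 1) :
    (∀ B : Matrix (Fin d) (Fin k) ℝ, X * Xᵀ * B = X * Xᵀ * A →
      ∀ B' : Matrix (Fin d) (Fin k) ℝ,
        frobSq (A * Bᵀ * X - X) ≤ frobSq (A * B'ᵀ * X - X)) ∧
    (∀ B' : Matrix (Fin d) (Fin k) ℝ,
      frobSq (A * Aᵀ * X - X) ≤ frobSq (A * B'ᵀ * X - X)) := by
  have key : ∀ B : Matrix (Fin d) (Fin k) ℝ, X * Xᵀ * B = X * Xᵀ * A →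
      ∀ B' : Matrix (Fin d) (Fin k) ℝ,
        frobSq (A * Bᵀ * X - X) ≤ frobSq (A * B'ᵀ * X - X) := by
    intro B hB B'
    set S := X * Xᵀ with hS
    have hSsymm : Sᵀ = S := by simp [hS, Matrix.transpose_mul, Matrix.mul_assoc]
    -- difference equals frobSq (Xᵀ * (B' - B))
    have hdiff : frobSq (A * B'ᵀ * X - X) - frobSq (A * Bᵀ * X - X)
        = frobSq (Xᵀ * (B' - B)) := by
      rw [expand_lemma d n k X A B hA, expand_lemma d n k X A B' hA, frobSq_eq_trace]
      have hC : (Xᵀ * (B' - B))ᵀ * (Xᵀ * (B' - B)) = (B' - B)ᵀ * S * (B' - B) := by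
        simp only [Matrix.transpose_mul, Matrix.transpose_transpose, hS, Matrix.mul_assoc]
      rw [hC]
      -- trace identities
      have e1 : (Bᵀ * S * A).trace = (Bᵀ * S * B).trace := by
        rw [show Bᵀ * S * A = Bᵀ * (S * A) from Matrix.mul_assoc _ _ _, ← hB]
        simp only [Matrix.mul_assoc]
      have e2 : (B'ᵀ * S * A).trace = (B'ᵀ * S * B).trace := by
        rw [show B'ᵀ * S * A = B'ᵀ * (S * A) from Matrix.mul_assoc _ _ _, ← hB]
        simp only [Matrix.mul_assoc]
      have e3 : (B'ᵀ * S * B).trace = (Bᵀ * S * B').trace := by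
        rw [← Matrix.trace_transpose (B'ᵀ * S * B)]
        simp only [Matrix.transpose_mul, Matrix.transpose_transpose, hSsymm, Matrix.mul_assoc]
      have e4 : ((B' - B)ᵀ * S * (B' - B)).trace
          = (B'ᵀ * S * B').trace - (B'ᵀ * S * B).trace - (Bᵀ * S * B').trace
            + (Bᵀ * S * B).trace := by
        simp only [Matrix.transpose_sub, Matrix.sub_mul, Matrix.mul_sub, Matrix.trace_sub,
          Matrix.trace_add]
        ring
      rw [e4, e1, e2, e3]
      ring
    have := frobSq_nonneg (Xᵀ * (B' - B))
    linarith [hdiff ▸ this]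
  refine ⟨key, key A ?_⟩
  rfl
end

section
/- Let X ∈ ℝ^{d×n}. Then min over W ∈ ℝ^{d×d} with rank(W) ≤ k of ‖Wᵀ X − X‖_F² equals min over A ∈ ℝ^{d×k} with AᵀA = I_k of ‖A Aᵀ X − X‖_F². -/
/-! If `Aᵀ A = 1` then `A Aᵀ` is symmetric of rank at most `k`, so every value of the second
problem is a value of the first. Conversely, the range of `Wᵀ` has dimension at most `k ≤ d`;
enlarge it to a `k`-dimensional subspace `U` and let the columns of `A` be an orthonormal basis
of `U`. Then `A Aᵀ` is the orthogonal projection onto `U`, which moves each column of `X` to its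
nearest point in `U`, in particular no farther than `Wᵀ` moves it. -/

open Matrix

open Module WithLp

namespace Submodule

theorem exists_le_finrank_eq {K V : Type*} [DivisionRing K] [AddCommGroup V] [Module K V]
    [FiniteDimensional K V] (N : Submodule K V) {k : ℕ} (hNk : finrank K N ≤ k)
    (hk : k ≤ finrank K V) : ∃ U : Submodule K V, N ≤ U ∧ finrank K U = k := by
  induction k, hNk using Nat.le_induction with
  | base => exact ⟨N, le_rfl, rfl⟩
  | succ k _ ih =>
    obtain ⟨U, hNU, hU⟩ := ih (by omega)
    obtain ⟨v, -, hv⟩ := SetLike.exists_of_lt (lt_top_of_finrank_lt_finrank (s := U) (by omega))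
    exact ⟨U ⊔ span K {v}, hNU.trans le_sup_left, by rw [finrank_sup_span_singleton hv, hU]⟩

theorem norm_sub_starProjection_le {𝕜 E : Type*} [RCLike 𝕜] [NormedAddCommGroup E]
    [InnerProductSpace 𝕜 E] {U : Submodule 𝕜 E} [U.HasOrthogonalProjection] (x : E) {w : E}
    (hw : w ∈ U) : ‖x - U.starProjection x‖ ≤ ‖x - w‖ := by
  rw [starProjection_minimal]
  exact ciInf_le ⟨0, Set.forall_mem_range.mpr fun _ => norm_nonneg _⟩ (⟨w, hw⟩ : U)

end Submodule

section OrthonormalColumns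

variable {𝕜 m ι : Type*} [RCLike 𝕜] [Fintype m]

def columnMatrix (v : ι → EuclideanSpace 𝕜 m) : Matrix m ι 𝕜 :=
  of fun i j => v j i

theorem Orthonormal.conjTranspose_mul_columnMatrix [DecidableEq ι] {v : ι → EuclideanSpace 𝕜 m}
    (hv : Orthonormal 𝕜 v) : (columnMatrix v)ᴴ * columnMatrix v = 1 := by
  ext i j
  rw [one_apply, ← orthonormal_iff_ite.mp hv i j]
  simp [columnMatrix, mul_apply, PiLp.inner_apply, mul_comm]

theorem OrthonormalBasis.toLpLin_columnMatrix_mul_conjTranspose [Fintype ι] [DecidableEq m]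
    {U : Submodule 𝕜 (EuclideanSpace 𝕜 m)} (b : OrthonormalBasis ι 𝕜 U) :
    toLpLin 2 2 (columnMatrix (fun i => (b i : EuclideanSpace 𝕜 m)) *
      (columnMatrix fun i => (b i : EuclideanSpace 𝕜 m))ᴴ) = U.starProjection := by
  ext x i
  rw [b.starProjection_eq_sum_rankOne]
  simp only [columnMatrix, ofLp_toLpLin, toLin'_apply, mulVec, dotProduct, mul_apply, of_apply,
    conjTranspose_apply, RCLike.star_def, Finset.sum_mul, ContinuousLinearMap.toLinearMap_sum,
    LinearMap.coe_sum, ContinuousLinearMap.coe_coe, Finset.sum_apply,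
    InnerProductSpace.rankOne_apply, PiLp.inner_apply, RCLike.inner_apply, ofLp_sum, ofLp_smul,
    Pi.smul_apply, smul_eq_mul]
  rw [Finset.sum_comm]
  exact Finset.sum_congr rfl fun j _ => Finset.sum_congr rfl fun l _ => by ring

end OrthonormalColumns

theorem Matrix.finrank_range_toLpLin {m n : Type*} [Fintype m] [Fintype n] [DecidableEq n]
    (W : Matrix m n ℝ) : finrank ℝ (LinearMap.range (toLpLin 2 2 W)) = W.rank :=
  (W.rank_eq_finrank_range_toLin (PiLp.basisFun 2 ℝ m) (PiLp.basisFun 2 ℝ n)).symm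

theorem Submodule.exists_transpose_mul_self_eq_one_and_toLpLin_eq_starProjection
    {m ι : Type*} [Fintype m] [DecidableEq m] [Fintype ι] [DecidableEq ι]
    (U : Submodule ℝ (EuclideanSpace ℝ m)) (hU : finrank ℝ U = Fintype.card ι) :
    ∃ A : Matrix m ι ℝ, Aᵀ * A = 1 ∧ toLpLin 2 2 (A * Aᵀ) = U.starProjection := by
  let b : OrthonormalBasis ι ℝ U :=
    (stdOrthonormalBasis ℝ U).reindex (Fintype.equivFinOfCardEq hU.symm).symm
  refine ⟨columnMatrix fun i => (b i : EuclideanSpace ℝ m), ?_, ?_⟩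
  · rw [← conjTranspose_eq_transpose_of_trivial]
    exact (b.orthonormal.comp_linearIsometry U.subtypeₗᵢ).conjTranspose_mul_columnMatrix
  · rw [← conjTranspose_eq_transpose_of_trivial]
    exact b.toLpLin_columnMatrix_mul_conjTranspose

theorem frobSq_eq_sum_norm_sq {d n : ℕ} (M : Matrix (Fin d) (Fin n) ℝ) :
    frobSq M = ∑ j, ‖toLp 2 (Mᵀ j)‖ ^ 2 := by
  rw [frobSq, Finset.sum_comm]
  simp [EuclideanSpace.real_norm_sq_eq]

theorem frobSq_mul_sub_le_of_forall_norm_le {d n : ℕ} {B C : Matrix (Fin d) (Fin d) ℝ}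
    (h : ∀ x : EuclideanSpace ℝ (Fin d), ‖toLpLin 2 2 B x - x‖ ≤ ‖toLpLin 2 2 C x - x‖)
    (X : Matrix (Fin d) (Fin n) ℝ) : frobSq (B * X - X) ≤ frobSq (C * X - X) := by
  have hcol : ∀ (M : Matrix (Fin d) (Fin d) ℝ) j,
      toLp 2 ((M * X - X)ᵀ j) = toLpLin 2 2 M (toLp 2 (Xᵀ j)) - toLp 2 (Xᵀ j) := by
    intro M j
    ext i
    rfl
  rw [frobSq_eq_sum_norm_sq, frobSq_eq_sum_norm_sq]
  gcongr with j
  rw [hcol, hcol]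
  exact h _

/-- minimizing `‖Wᵀ X − X‖_F²` over `W ∈ ℝ^{d×d}` with `rank W ≤ k`
equals minimizing `‖A Aᵀ X − X‖_F²` over `A ∈ ℝ^{d×k}` with `AᵀA = I_k`. -/
theorem stmt_7 (d n k : ℕ) (hk : k ≤ d) (X : Matrix (Fin d) (Fin n) ℝ) :
    sInf {y : ℝ | ∃ W : Matrix (Fin d) (Fin d) ℝ,
        W.rank ≤ k ∧ y = frobSq (Wᵀ * X - X)} =
    sInf {y : ℝ | ∃ A : Matrix (Fin d) (Fin k) ℝ,
        Aᵀ * A = 1 ∧ y = frobSq (A * Aᵀ * X - X)} := by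
  refine csInf_eq_csInf_of_forall_exists_le ?_ ?_
  · rintro _ ⟨W, hW, rfl⟩
    obtain ⟨U, hWU, hU⟩ := (LinearMap.range (toLpLin 2 2 Wᵀ)).exists_le_finrank_eq (k := k)
      (by rwa [finrank_range_toLpLin, rank_transpose]) (by simpa using hk)
    obtain ⟨A, hA, hAU⟩ := U.exists_transpose_mul_self_eq_one_and_toLpLin_eq_starProjection
      (hU.trans (Fintype.card_fin k).symm)
    refine ⟨_, ⟨A, hA, rfl⟩, frobSq_mul_sub_le_of_forall_norm_le (fun x => ?_) X⟩
    rw [hAU, norm_sub_rev, norm_sub_rev _ x]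
    exact U.norm_sub_starProjection_le x (hWU (LinearMap.mem_range_self _ x))
  · rintro _ ⟨A, hA, rfl⟩
    refine ⟨_, ⟨A * Aᵀ, ?_, by rw [transpose_mul, transpose_transpose]⟩, le_rfl⟩
    exact (rank_mul_le_left A Aᵀ).trans ((rank_le_card_width A).trans (Fintype.card_fin k).le)
end

section
/- Let W ∈ ℝ^{d×c} with W Wᵀ invertible (so d ≤ c and W has full row rank). Then Tr((W Wᵀ)^{1/2}) − Tr(Wᵀ (W Wᵀ)^{−1/2} W) = 0; more generally, for any V ∈ ℝ^{d×c}, Tr((V Vᵀ)^{1/2}) ≤ Tr(Vᵀ (W Wᵀ)^{−1/2} V)/2 + Tr((W Wᵀ)^{1/2})/2. -/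
/-!
Write `S = (W Wᵀ)^{1/2}` and `T = (V Vᵀ)^{1/2}`. Cyclicity of the trace turns `Tr(Vᵀ S⁻¹ V)`
into `Tr(S⁻¹ T²)`, and the inequality is `0 ≤ Tr((T - S) S⁻¹ (T - S))`, the trace of a congruence
of the positive semidefinite `S⁻¹`. For `V = W` the same computation gives
`Tr(Wᵀ S⁻¹ W) = Tr(S⁻¹ S²) = Tr S`.
-/

open Matrix

noncomputable def Matrix.PosSemidef.sqrt {n 𝕜 : Type*} [Fintype n] [RCLike 𝕜] [DecidableEq n]
    [PartialOrder 𝕜] [StarOrderedRing 𝕜]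
    {A : Matrix n n 𝕜} (hA : A.PosSemidef) : Matrix n n 𝕜 :=
  hA.1.eigenvectorUnitary.1 * diagonal ((↑) ∘ Real.sqrt ∘ hA.1.eigenvalues) *
    (star hA.1.eigenvectorUnitary : Matrix n n 𝕜)

namespace Matrix

variable {n : Type*} [Fintype n] [DecidableEq n]

lemma PosSemidef.posSemidef_sqrt {A : Matrix n n ℝ} (hA : A.PosSemidef) : hA.sqrt.PosSemidef :=
  (posSemidef_diagonal_iff.mpr fun _ ↦ Real.sqrt_nonneg _).mul_mul_conjTranspose_same _

lemma PosSemidef.sqrt_mul_self {A : Matrix n n ℝ} (hA : A.PosSemidef) : hA.sqrt * hA.sqrt = A := by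
  set U : Matrix n n ℝ := hA.1.eigenvectorUnitary.1
  set D : Matrix n n ℝ := diagonal (RCLike.ofReal ∘ Real.sqrt ∘ hA.1.eigenvalues)
  have hD : D * D = diagonal (RCLike.ofReal ∘ hA.1.eigenvalues) := by
    rw [diagonal_mul_diagonal]
    congr 1
    funext i
    simp [Real.mul_self_sqrt (hA.eigenvalues_nonneg i)]
  calc hA.sqrt * hA.sqrt = U * (D * (star U * U) * D) * star U := by
        simp only [PosSemidef.sqrt, U, D, Matrix.mul_assoc]
    _ = A := by
        rw [Unitary.coe_star_mul_self, Matrix.mul_one, hD]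
        conv_rhs => rw [hA.1.spectral_theorem, Unitary.conjStarAlgAut_apply]

lemma PosDef.isUnit_det_sqrt {A : Matrix n n ℝ} (hA : A.PosDef) : IsUnit hA.posSemidef.sqrt.det :=
  isUnit_of_mul_isUnit_left (y := hA.posSemidef.sqrt.det) <| by
    rw [← det_mul, hA.posSemidef.sqrt_mul_self]
    exact hA.det_pos.ne'.isUnit

theorem PosSemidef.two_mul_trace_le {R : Type*} [CommRing R] [PartialOrder R] [StarRing R]
    [AddLeftMono R] {S T : Matrix n n R} (hS : S.PosSemidef) (hS_det : IsUnit S.det)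
    (hT : T.IsHermitian) : 2 * T.trace ≤ (S⁻¹ * (T * T)).trace + S.trace := by
  have hTS : (T - S)ᴴ = T - S := by rw [conjTranspose_sub, hT.eq, hS.isHermitian.eq]
  have h_expand : (T - S) * S⁻¹ * (T - S) = T * S⁻¹ * T - T - T + S := by
    simp only [Matrix.sub_mul, Matrix.mul_sub, nonsing_inv_mul_cancel_right _ _ hS_det,
      mul_nonsing_inv _ hS_det, Matrix.one_mul]
    abel
  have h_nonneg := (hS.inv.conjTranspose_mul_mul_same (T - S)).trace_nonneg
  rw [hTS, h_expand, trace_add, trace_sub, trace_sub, trace_mul_cycle] at h_nonneg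
  rw [← sub_nonneg, trace_mul_comm S⁻¹]
  convert h_nonneg using 1
  ring

end Matrix

/-- for `W ∈ ℝ^{d×c}` with `W Wᵀ` positive definite,
`Tr((W Wᵀ)^{1/2}) − Tr(Wᵀ (W Wᵀ)^{−1/2} W) = 0`, and for any `V ∈ ℝ^{d×c}`,
`Tr((V Vᵀ)^{1/2}) ≤ Tr(Vᵀ (W Wᵀ)^{−1/2} V)/2 + Tr((W Wᵀ)^{1/2})/2`.
Here `(W Wᵀ)^{1/2}` is the PSD square root and `(W Wᵀ)^{−1/2}` its inverse. -/
theorem stmt_13 (d c : ℕ) (W : Matrix (Fin d) (Fin c) ℝ)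
    (hW : (W * Wᴴ).PosDef) :
    (hW.posSemidef.sqrt.trace - (Wᵀ * (hW.posSemidef.sqrt)⁻¹ * W).trace = 0) ∧
    (∀ V : Matrix (Fin d) (Fin c) ℝ,
      (Matrix.posSemidef_self_mul_conjTranspose V).sqrt.trace ≤
        (Vᵀ * (hW.posSemidef.sqrt)⁻¹ * V).trace / 2 + hW.posSemidef.sqrt.trace / 2) := by
  set S := hW.posSemidef.sqrt
  have hS_det : IsUnit S.det := hW.isUnit_det_sqrt
  have h_trace (V : Matrix (Fin d) (Fin c) ℝ) :
      (Vᵀ * S⁻¹ * V).trace = (S⁻¹ * (V * Vᴴ)).trace := by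
    rw [← conjTranspose_eq_transpose_of_trivial, trace_mul_cycle, trace_mul_comm]
  refine ⟨?_, fun V ↦ ?_⟩
  · rw [h_trace, ← hW.posSemidef.sqrt_mul_self, nonsing_inv_mul_cancel_left _ _ hS_det, sub_self]
  · have hVV := posSemidef_self_mul_conjTranspose V
    have := hW.posSemidef.posSemidef_sqrt.two_mul_trace_le hS_det hVV.posSemidef_sqrt.isHermitian
    rw [hVV.sqrt_mul_self, ← h_trace] at this
    linarith
end
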